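/- For every ε > 0 there exists γ₀ > 0 such that for all 0 < γ < γ₀, the normalized density u* satisfies |∫₀^{2π} sin θ · u*(θ) dθ − √3/2| < ε. -/

import Mathlib

open Real

/-- Normalizing integral `∫₀^{2π} e^{−α(r + 2 sin r)} dr` with `α = 2/γ`. -/
noncomputable def Znorm (γ : ℝ) : ℝ :=
  ∫ r in (0:ℝ)..(2 * π), Real.exp (-(2 / γ) * (r + 2 * Real.sin r))

/-- The constant `C₀ = (e^{−2πα} − 1)/∫₀^{2π} e^{−α(r+2 sin r)} dr`, `α = 2/γ`. -/
noncomputable def C0 (γ : ℝ) : ℝ :=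
  (Real.exp (-(2 * π) * (2 / γ)) - 1) / Znorm γ

/-- The unnormalized stationary density
`w(θ) = C₀ e^{α(θ+2 sin θ)} ∫₀^θ e^{−α(r+2 sin r)} dr + e^{α(θ+2 sin θ)}`, `α = 2/γ`. -/
noncomputable def wfun (γ : ℝ) (θ : ℝ) : ℝ :=
  C0 γ * Real.exp ((2 / γ) * (θ + 2 * Real.sin θ)) *
      (∫ r in (0:ℝ)..θ, Real.exp (-(2 / γ) * (r + 2 * Real.sin r)))
    + Real.exp ((2 / γ) * (θ + 2 * Real.sin θ))

/-- The normalized stationary density `u*(θ) = w(θ)/∫₀^{2π} w`. -/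
noncomputable def ustar (γ : ℝ) (θ : ℝ) : ℝ :=
  wfun γ θ / ∫ s in (0:ℝ)..(2 * π), wfun γ s

open Set intervalIntegral MeasureTheory

set_option maxHeartbeats 1000000

noncomputable def phi (x : ℝ) : ℝ := x + 2 * Real.sin x

lemma phi_hasDeriv (x : ℝ) : HasDerivAt phi (1 + 2 * Real.cos x) x := by
  exact (hasDerivAt_id x).add ((Real.hasDerivAt_sin x).const_mul 2)

lemma phi_cont : Continuous phi := by unfold phi; continuity

lemma phi_shift (x : ℝ) : phi (x + 2 * π) = phi x + 2 * π := by
  simp [phi, Real.sin_add_two_pi]; ring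

lemma abs_sin_le_abs (t : ℝ) : |Real.sin t| ≤ |t| := by
  rcases eq_or_ne t 0 with h | h
  · simp [h]
  · exact (Real.abs_sin_lt_abs h).le

lemma phi_lip (x y : ℝ) : |phi x - phi y| ≤ 3 * |x - y| := by
  have h1 : |Real.sin x - Real.sin y| ≤ |x - y| := by
    rw [Real.sin_sub_sin]
    have e1 : |Real.sin ((x - y) / 2)| ≤ |x - y| / 2 := by
      have := abs_sin_le_abs ((x - y) / 2)
      rwa [abs_div, abs_two] at this
    have e2 : |Real.cos ((x + y) / 2)| ≤ 1 := Real.abs_cos_le_one _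
    calc |2 * Real.sin ((x - y) / 2) * Real.cos ((x + y) / 2)|
        = 2 * |Real.sin ((x - y) / 2)| * |Real.cos ((x + y) / 2)| := by
          rw [abs_mul, abs_mul]; simp
      _ ≤ 2 * (|x - y| / 2) * 1 := by
          apply mul_le_mul _ e2 (abs_nonneg _) (by positivity)
          have := abs_nonneg (Real.sin ((x - y) / 2)); nlinarith
      _ = |x - y| := by ring
  calc |phi x - phi y| = |(x - y) + 2 * (Real.sin x - Real.sin y)| := by unfold phi; ring_nf
    _ ≤ |x - y| + |2 * (Real.sin x - Real.sin y)| := abs_add_le _ _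
    _ ≤ |x - y| + 2 * |x - y| := by rw [abs_mul, abs_two]; nlinarith
    _ = 3 * |x - y| := by ring

lemma cos_two_pi_div_three : Real.cos (2 * π / 3) = -(1/2) := by
  have : 2 * π / 3 = π - π / 3 := by ring
  rw [this, Real.cos_pi_sub, Real.cos_pi_div_three]

lemma cos_ge_on (x : ℝ) (hx : x ∈ Icc (-(2 * π / 3)) (2 * π / 3)) : -(1/2) ≤ Real.cos x := by
  have hx' : |x| ≤ 2 * π / 3 := abs_le.mpr ⟨hx.1, hx.2⟩
  have : Real.cos (2 * π / 3) ≤ Real.cos |x| := by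
    apply Real.cos_le_cos_of_nonneg_of_le_pi (abs_nonneg x) _ hx'
    linarith [Real.pi_pos]
  rwa [Real.cos_abs, cos_two_pi_div_three] at this

lemma cos_le_on (x : ℝ) (hx : x ∈ Icc (2 * π / 3) (4 * π / 3)) : Real.cos x ≤ -(1/2) := by
  have hπ := Real.pi_pos
  rcases le_total x π with h | h
  · have := Real.cos_le_cos_of_nonneg_of_le_pi (by linarith [hx.1]) h hx.1
    rwa [cos_two_pi_div_three] at this
  · have hc : Real.cos x = Real.cos (2 * π - x) := (Real.cos_two_pi_sub x).symm
    have := Real.cos_le_cos_of_nonneg_of_le_pi (show (0:ℝ) ≤ 2*π/3 by linarith)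
      (show 2 * π - x ≤ π by linarith) (show 2*π/3 ≤ 2*π - x by linarith [hx.2])
    rw [cos_two_pi_div_three] at this; linarith [hc ▸ this]

lemma cos_gt_on (x : ℝ) (hx : x ∈ Ioo 0 (2 * π / 3)) : -(1/2) < Real.cos x := by
  have hπ := Real.pi_pos
  have : Real.cos (2 * π / 3) < Real.cos x :=
    Real.strictAntiOn_cos ⟨hx.1.le, by linarith [hx.2]⟩ ⟨by linarith, by linarith⟩ hx.2
  rwa [cos_two_pi_div_three] at this

lemma cos_lt_on (x : ℝ) (hx : x ∈ Ioo (2 * π / 3) (4 * π / 3)) : Real.cos x < -(1/2) := by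
  have hπ := Real.pi_pos
  rcases le_total x π with h | h
  · have := Real.strictAntiOn_cos (a := 2*π/3) (b := x) ⟨by linarith, by linarith⟩
      ⟨by linarith [hx.1], h⟩ hx.1
    rwa [cos_two_pi_div_three] at this
  · have hc : Real.cos x = Real.cos (2 * π - x) := (Real.cos_two_pi_sub x).symm
    have := Real.strictAntiOn_cos (a := 2*π/3) (b := 2*π - x) ⟨by linarith, by linarith⟩
      ⟨by linarith [hx.2], by linarith⟩ (by linarith [hx.2])
    rw [cos_two_pi_div_three] at this; linarith [hc ▸ this]

lemma phi_mono1 : MonotoneOn phi (Icc (-(2 * π / 3)) (2 * π / 3)) := by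
  apply monotoneOn_of_deriv_nonneg (convex_Icc _ _) phi_cont.continuousOn
    (fun x _ => (phi_hasDeriv x).differentiableAt.differentiableWithinAt)
  intro x hx
  rw [interior_Icc] at hx
  rw [(phi_hasDeriv x).deriv]
  linarith [cos_ge_on x ⟨hx.1.le, hx.2.le⟩]

lemma phi_anti1 : AntitoneOn phi (Icc (2 * π / 3) (4 * π / 3)) := by
  apply antitoneOn_of_deriv_nonpos (convex_Icc _ _) phi_cont.continuousOn
    (fun x _ => (phi_hasDeriv x).differentiableAt.differentiableWithinAt)
  intro x hx
  rw [interior_Icc] at hx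
  rw [(phi_hasDeriv x).deriv]
  linarith [cos_le_on x ⟨hx.1.le, hx.2.le⟩]

lemma phi_smono : StrictMonoOn phi (Icc 0 (2 * π / 3)) := by
  apply strictMonoOn_of_deriv_pos (convex_Icc _ _) phi_cont.continuousOn
  intro x hx
  rw [interior_Icc] at hx
  rw [(phi_hasDeriv x).deriv]
  linarith [cos_gt_on x hx]

lemma phi_santi : StrictAntiOn phi (Icc (2 * π / 3) (4 * π / 3)) := by
  apply strictAntiOn_of_deriv_neg (convex_Icc _ _) phi_cont.continuousOn
  intro x hx
  rw [interior_Icc] at hx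
  rw [(phi_hasDeriv x).deriv]
  linarith [cos_lt_on x hx]

lemma sin_lip (x y : ℝ) : |Real.sin x - Real.sin y| ≤ |x - y| := by
  rw [Real.sin_sub_sin]
  have e1 : |Real.sin ((x - y) / 2)| ≤ |x - y| / 2 := by
    have := abs_sin_le_abs ((x - y) / 2)
    rwa [abs_div, abs_two] at this
  have e2 : |Real.cos ((x + y) / 2)| ≤ 1 := Real.abs_cos_le_one _
  calc |2 * Real.sin ((x - y) / 2) * Real.cos ((x + y) / 2)|
      = 2 * |Real.sin ((x - y) / 2)| * |Real.cos ((x + y) / 2)| := by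
        rw [abs_mul, abs_mul]; simp
    _ ≤ 2 * (|x - y| / 2) * 1 := by
        apply mul_le_mul _ e2 (abs_nonneg _) (by positivity)
        have := abs_nonneg (Real.sin ((x - y) / 2)); nlinarith
    _ = |x - y| := by ring

lemma sin_two_pi_div_three : Real.sin (2 * π / 3) = Real.sqrt 3 / 2 := by
  have : 2 * π / 3 = π - π / 3 := by ring
  rw [this, Real.sin_pi_sub, Real.sin_pi_div_three]

lemma sin_four_pi_div_three : Real.sin (4 * π / 3) = -(Real.sqrt 3 / 2) := by
  have : 4 * π / 3 = π / 3 + π := by ring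
  rw [this, Real.sin_add_pi, Real.sin_pi_div_three]

lemma phi23 : phi (2 * π / 3) = 2 * π / 3 + Real.sqrt 3 := by
  rw [phi, sin_two_pi_div_three]; ring

lemma phi43 : phi (4 * π / 3) = 4 * π / 3 - Real.sqrt 3 := by
  rw [phi, sin_four_pi_div_three]; ring

lemma sqrt3_lt_two : Real.sqrt 3 < 2 := by
  rw [show (2:ℝ) = Real.sqrt 4 by rw [show (4:ℝ) = 2^2 by norm_num, Real.sqrt_sq]; norm_num]
  exact Real.sqrt_lt_sqrt (by norm_num) (by norm_num)

lemma one_lt_sqrt3 : 1 < Real.sqrt 3 := by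
  rw [show (1:ℝ) = Real.sqrt 1 by simp]
  exact Real.sqrt_lt_sqrt (by norm_num) (by norm_num)

lemma phi43_nonneg : 0 ≤ phi (4 * π / 3) := by
  rw [phi43]
  have := Real.pi_gt_three
  linarith [sqrt3_lt_two]

lemma phi_ge_min {r : ℝ} (hr : r ∈ Icc (2 * π / 3) (8 * π / 3)) : phi (4 * π / 3) ≤ phi r := by
  have hπ := Real.pi_pos
  rcases le_total r (4 * π / 3) with h | h
  · exact phi_anti1 ⟨hr.1, h⟩ (by constructor <;> linarith) h
  · have h1 : phi (r - 2 * π) ≥ phi (-(2 * π / 3)) := by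
      apply phi_mono1 (by constructor <;> linarith) (by constructor <;> linarith [hr.2]) (by linarith)
    have h2 : phi (r - 2 * π) + 2 * π = phi r := by
      rw [← phi_shift]; ring_nf
    have h3 : phi (-(2 * π / 3)) = phi (4 * π / 3) - 2 * π := by
      have := phi_shift (-(2 * π / 3))
      have he : -(2 * π / 3) + 2 * π = 4 * π / 3 := by ring
      rw [he] at this; linarith
    linarith

/-- Key upper bound, first case. -/
lemma keyB1 {θ r : ℝ} (hθ : θ ∈ Icc 0 (4 * π / 3)) (hr : r ∈ Icc θ (θ + 2 * π)) :
    phi θ - phi r ≤ max 0 (phi θ - phi (4 * π / 3)) := by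
  have hπ := Real.pi_pos
  rcases le_total r (2 * π / 3) with h | h
  · have : phi θ ≤ phi r :=
      phi_mono1 (by constructor <;> linarith [hθ.1, hr.1]) (by constructor <;> linarith [hr.1, hθ.1]) hr.1
    exact le_max_of_le_left (by linarith)
  · rcases le_total r (8 * π / 3) with h2 | h2
    · have := phi_ge_min ⟨h, h2⟩
      exact le_max_of_le_right (by linarith)
    · have hrθ : r - 2 * π ≤ θ := by linarith [hr.2]
      have hge : 2 * π / 3 ≤ r - 2 * π := by linarith
      have h1 : phi θ ≤ phi (r - 2 * π) :=
        phi_anti1 ⟨hge, by linarith [hθ.2]⟩ ⟨by linarith [hge], hθ.2⟩ hrθ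
      have h2 : phi (r - 2 * π) + 2 * π = phi r := by rw [← phi_shift]; ring_nf
      exact le_max_of_le_left (by linarith)

/-- Key upper bound, second case. -/
lemma keyB2 {θ r : ℝ} (hθ : θ ∈ Icc (4 * π / 3) (2 * π)) (hr : r ∈ Icc θ (θ + 2 * π)) :
    phi θ - phi r ≤ 0 := by
  have hπ := Real.pi_pos
  have hshift : ∀ x, phi (x - 2 * π) + 2 * π = phi x := by
    intro x; rw [← phi_shift]; ring_nf
  rcases le_total r (8 * π / 3) with h | h
  · have : phi (θ - 2 * π) ≤ phi (r - 2 * π) :=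
      phi_mono1 (by constructor <;> linarith [hθ.1, hθ.2])
        (by constructor <;> linarith [hr.1, hθ.1]) (by linarith [hr.1])
    have e1 := hshift θ; have e2 := hshift r
    linarith
  · -- r ≥ 8π/3 : phi r ≥ phi(4π/3) + 2π ≥ 2π ≥ phi θ
    have hr4 : r - 2 * π ∈ Icc (2 * π / 3) (8 * π / 3) := by
      constructor <;> linarith [hr.2, hθ.2]
    have h1 : phi (4 * π / 3) ≤ phi (r - 2 * π) := phi_ge_min hr4
    have e2 := hshift r
    -- phi θ ≤ 2π
    have h2 : phi (θ - 2 * π) ≤ phi 0 :=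
      phi_mono1 (by constructor <;> linarith [hθ.1, hθ.2])
        (by constructor <;> linarith) (by linarith [hθ.2])
    have e1 := hshift θ
    have h0 : phi 0 = 0 := by simp [phi]
    linarith [phi43_nonneg]

lemma Eexp_eq (γ r : ℝ) : Real.exp (-(2 / γ) * (r + 2 * Real.sin r)) = Real.exp (-(2 / γ * phi r)) := by
  rw [phi]; ring_nf

lemma E_cont (γ : ℝ) : Continuous fun r => Real.exp (-(2 / γ) * (r + 2 * Real.sin r)) := by
  continuity

lemma E_intble (γ a b : ℝ) :
    IntervalIntegrable (fun r => Real.exp (-(2 / γ) * (r + 2 * Real.sin r))) MeasureTheory.volume a b :=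
  (E_cont γ).intervalIntegrable a b

noncomputable def Ffun (γ x : ℝ) : ℝ := ∫ r in (0:ℝ)..x, Real.exp (-(2 / γ) * (r + 2 * Real.sin r))

lemma Ffun_cont (γ : ℝ) : Continuous (Ffun γ) :=
  intervalIntegral.continuous_primitive (fun a b => E_intble γ a b) 0

lemma wfun_cont (γ : ℝ) : Continuous (wfun γ) := by
  unfold wfun
  have := Ffun_cont γ
  apply Continuous.add
  · exact (continuous_const.mul (by continuity)).mul (Ffun_cont γ)
  · continuity

lemma Znorm_pos (γ : ℝ) : 0 < Znorm γ := by
  apply intervalIntegral_pos_of_pos (E_intble γ 0 (2*π)) (fun x => Real.exp_pos _)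
  positivity

lemma shift_int (γ θ : ℝ) :
    (∫ r in (2*π)..(θ + 2*π), Real.exp (-(2 / γ) * (r + 2 * Real.sin r)))
      = Real.exp (-(2 * π) * (2 / γ)) * Ffun γ θ := by
  have h1 : (∫ r in (2*π)..(θ + 2*π), Real.exp (-(2 / γ) * (r + 2 * Real.sin r)))
      = ∫ x in (0:ℝ)..θ, Real.exp (-(2 / γ) * ((x + 2*π) + 2 * Real.sin (x + 2*π))) := by
    rw [intervalIntegral.integral_comp_add_right (fun r => Real.exp (-(2 / γ) * (r + 2 * Real.sin r))) (2*π)]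
    norm_num
  rw [h1]
  have h2 : ∀ x : ℝ, Real.exp (-(2 / γ) * ((x + 2*π) + 2 * Real.sin (x + 2*π)))
      = Real.exp (-(2 * π) * (2 / γ)) * Real.exp (-(2 / γ) * (x + 2 * Real.sin x)) := by
    intro x
    rw [← Real.exp_add, Real.sin_add_two_pi]
    ring_nf
  simp_rw [h2]
  rw [intervalIntegral.integral_const_mul]
  rfl

lemma wkey {γ : ℝ} (θ : ℝ) :
    wfun γ θ * Znorm γ = ∫ r in θ..(θ + 2*π), Real.exp (2 / γ * (phi θ - phi r)) := by
  have hZ := (Znorm_pos γ).ne'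
  have split1 : Znorm γ - Ffun γ θ
      = ∫ r in θ..(2*π), Real.exp (-(2 / γ) * (r + 2 * Real.sin r)) := by
    rw [Znorm, Ffun]
    exact intervalIntegral.integral_interval_sub_left (E_intble γ 0 (2*π)) (E_intble γ 0 θ)
  have split2 : (∫ r in θ..(2*π), Real.exp (-(2 / γ) * (r + 2 * Real.sin r)))
      + (∫ r in (2*π)..(θ + 2*π), Real.exp (-(2 / γ) * (r + 2 * Real.sin r)))
      = ∫ r in θ..(θ + 2*π), Real.exp (-(2 / γ) * (r + 2 * Real.sin r)) :=
    intervalIntegral.integral_add_adjacent_intervals (E_intble γ _ _) (E_intble γ _ _)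
  have key : wfun γ θ * Znorm γ
      = Real.exp (2 / γ * phi θ) * ∫ r in θ..(θ + 2*π), Real.exp (-(2 / γ) * (r + 2 * Real.sin r)) := by
    rw [wfun, C0]
    have hE : Real.exp ((2 / γ) * (θ + 2 * Real.sin θ)) = Real.exp (2 / γ * phi θ) := by rw [phi]
    rw [shift_int] at split2
    rw [hE, ← split2, ← split1]
    have hF : (∫ r in (0:ℝ)..θ, Real.exp (-(2 / γ) * (r + 2 * Real.sin r))) = Ffun γ θ := rfl
    rw [hF]
    field_simp
    ring
  rw [key, ← intervalIntegral.integral_const_mul]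
  apply intervalIntegral.integral_congr
  intro r _
  show Real.exp (2 / γ * phi θ) * Real.exp (-(2 / γ) * (r + 2 * Real.sin r))
      = Real.exp (2 / γ * (phi θ - phi r))
  rw [Eexp_eq, ← Real.exp_add]
  ring_nf

lemma G_cont (γ θ : ℝ) : Continuous fun r => Real.exp (2 / γ * (phi θ - phi r)) :=
  Real.continuous_exp.comp (continuous_const.mul (continuous_const.sub phi_cont))

lemma w_formula (γ θ : ℝ) :
    wfun γ θ = (∫ r in θ..(θ + 2*π), Real.exp (2 / γ * (phi θ - phi r))) / Znorm γ := by
  rw [eq_div_iff (Znorm_pos γ).ne', wkey]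

lemma w_pos (γ θ : ℝ) : 0 < wfun γ θ := by
  rw [w_formula]
  apply div_pos _ (Znorm_pos γ)
  apply intervalIntegral_pos_of_pos ((G_cont γ θ).intervalIntegrable _ _)
    (fun x => Real.exp_pos _)
  linarith [Real.pi_pos]

lemma w_upper {γ θ M : ℝ} (hγ : 0 < γ)
    (hM : ∀ r ∈ Icc θ (θ + 2*π), phi θ - phi r ≤ M) :
    wfun γ θ ≤ 2 * π * Real.exp (2 / γ * M) / Znorm γ := by
  have hab : θ ≤ θ + 2*π := by linarith [Real.pi_pos]
  rw [w_formula]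
  gcongr
  · exact (Znorm_pos γ).le
  calc (∫ r in θ..(θ + 2*π), Real.exp (2 / γ * (phi θ - phi r)))
      ≤ ∫ _r in θ..(θ + 2*π), Real.exp (2 / γ * M) := by
        apply intervalIntegral.integral_mono_on hab
          ((G_cont γ θ).intervalIntegrable _ _) (intervalIntegrable_const)
        intro r hr
        apply Real.exp_le_exp.mpr
        have := hM r hr
        have ha : 0 ≤ 2 / γ := by positivity
        nlinarith
    _ = 2 * π * Real.exp (2 / γ * M) := by
        rw [intervalIntegral.integral_const, smul_eq_mul]
        ring

lemma w_lower {γ θ M c1 c2 : ℝ} (hγ : 0 < γ) (h1 : θ ≤ c1) (h2 : c1 ≤ c2) (h3 : c2 ≤ θ + 2*π)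
    (hM : ∀ r ∈ Icc c1 c2, M ≤ phi θ - phi r) :
    (c2 - c1) * Real.exp (2 / γ * M) / Znorm γ ≤ wfun γ θ := by
  rw [w_formula]
  gcongr
  · exact (Znorm_pos γ).le
  have splitA : (∫ r in θ..c1, Real.exp (2 / γ * (phi θ - phi r)))
      + (∫ r in c1..(θ + 2*π), Real.exp (2 / γ * (phi θ - phi r)))
      = ∫ r in θ..(θ + 2*π), Real.exp (2 / γ * (phi θ - phi r)) :=
    intervalIntegral.integral_add_adjacent_intervals
      ((G_cont γ θ).intervalIntegrable _ _) ((G_cont γ θ).intervalIntegrable _ _)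
  have splitB : (∫ r in c1..c2, Real.exp (2 / γ * (phi θ - phi r)))
      + (∫ r in c2..(θ + 2*π), Real.exp (2 / γ * (phi θ - phi r)))
      = ∫ r in c1..(θ + 2*π), Real.exp (2 / γ * (phi θ - phi r)) :=
    intervalIntegral.integral_add_adjacent_intervals
      ((G_cont γ θ).intervalIntegrable _ _) ((G_cont γ θ).intervalIntegrable _ _)
  have n1 : 0 ≤ ∫ r in θ..c1, Real.exp (2 / γ * (phi θ - phi r)) :=
    intervalIntegral.integral_nonneg h1 (fun r _ => (Real.exp_pos _).le)
  have n2 : 0 ≤ ∫ r in c2..(θ + 2*π), Real.exp (2 / γ * (phi θ - phi r)) :=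
    intervalIntegral.integral_nonneg h3 (fun r _ => (Real.exp_pos _).le)
  have mid : (c2 - c1) * Real.exp (2 / γ * M)
      ≤ ∫ r in c1..c2, Real.exp (2 / γ * (phi θ - phi r)) := by
    calc (c2 - c1) * Real.exp (2 / γ * M)
        = ∫ _r in c1..c2, Real.exp (2 / γ * M) := by
          rw [intervalIntegral.integral_const]; simp
      _ ≤ _ := by
          apply intervalIntegral.integral_mono_on h2 (intervalIntegrable_const)
            ((G_cont γ θ).intervalIntegrable _ _)
          intro r hr
          apply Real.exp_le_exp.mpr
          have := hM r hr
          have ha : 0 ≤ 2 / γ := by positivity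
          nlinarith
  linarith

/-- The exponent bound on the "outside" region. -/
lemma region_out {δ θ r : ℝ} (hδ0 : 0 < δ) (hδ : δ ≤ π / 3)
    (hθ : θ ∈ Icc 0 (2 * π)) (hout : θ ≤ 2*π/3 - δ ∨ 2*π/3 + δ ≤ θ)
    (hr : r ∈ Icc θ (θ + 2 * π)) :
    phi θ - phi r ≤ (phi (2*π/3) - phi (4*π/3))
      - min (phi (2*π/3) - phi (2*π/3 - δ)) (phi (2*π/3) - phi (2*π/3 + δ)) := by
  have hπ := Real.pi_gt_three
  set c := min (phi (2*π/3) - phi (2*π/3 - δ)) (phi (2*π/3) - phi (2*π/3 + δ)) with hcdef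
  have hplus : phi (4*π/3) ≤ phi (2*π/3 + δ) :=
    phi_anti1 (by constructor <;> linarith) (by constructor <;> linarith) (by linarith)
  have hcm : c ≤ phi (2*π/3) - phi (4*π/3) := by
    have : c ≤ phi (2*π/3) - phi (2*π/3 + δ) := min_le_right _ _
    linarith
  rcases le_or_gt θ (4*π/3) with hcase | hcase
  · have hb1 := keyB1 ⟨hθ.1, hcase⟩ hr
    have hub : phi θ - phi (4*π/3) ≤ (phi (2*π/3) - phi (4*π/3)) - c := by
      rcases hout with h | h
      · have : phi θ ≤ phi (2*π/3 - δ) :=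
          phi_mono1 (by constructor <;> linarith [hθ.1]) (by constructor <;> linarith) h
        have := min_le_left (phi (2*π/3) - phi (2*π/3 - δ)) (phi (2*π/3) - phi (2*π/3 + δ))
        rw [← hcdef] at this
        linarith
      · have : phi θ ≤ phi (2*π/3 + δ) :=
          phi_anti1 (by constructor <;> linarith) (by constructor <;> linarith [hcase]) h
        have h2 := min_le_right (phi (2*π/3) - phi (2*π/3 - δ)) (phi (2*π/3) - phi (2*π/3 + δ))
        rw [← hcdef] at h2
        linarith
    rcases max_cases 0 (phi θ - phi (4*π/3)) with ⟨he, _⟩ | ⟨he, _⟩ <;> rw [he] at hb1 <;> linarith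
  · have := keyB2 ⟨hcase.le, hθ.2⟩ hr
    linarith

lemma c_pos {δ : ℝ} (hδ0 : 0 < δ) (hδ : δ ≤ π / 3) :
    0 < min (phi (2*π/3) - phi (2*π/3 - δ)) (phi (2*π/3) - phi (2*π/3 + δ)) := by
  have hπ := Real.pi_gt_three
  apply lt_min
  · have : phi (2*π/3 - δ) < phi (2*π/3) :=
      phi_smono (by constructor <;> linarith) (by constructor <;> linarith) (by linarith)
    linarith
  · have : phi (2*π/3 + δ) < phi (2*π/3) :=
      phi_santi (by constructor <;> linarith) (by constructor <;> linarith) (by linarith)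
    linarith

lemma region_in {δ' θ r : ℝ} (hδ0 : 0 < δ') (hδ : δ' ≤ π / 3)
    (hθ : θ ∈ Icc (2*π/3 - δ') (2*π/3)) (hr : r ∈ Icc (4*π/3) (4*π/3 + δ')) :
    (phi (2*π/3) - phi (4*π/3)) - 6 * δ' ≤ phi θ - phi r := by
  have h1 : |phi θ - phi (2*π/3)| ≤ 3 * δ' := by
    refine (phi_lip _ _).trans ?_
    have : |θ - 2*π/3| ≤ δ' := abs_le.mpr ⟨by linarith [hθ.1], by linarith [hθ.2]⟩
    linarith
  have h2 : |phi r - phi (4*π/3)| ≤ 3 * δ' := by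
    refine (phi_lip _ _).trans ?_
    have : |r - 4*π/3| ≤ δ' := abs_le.mpr ⟨by linarith [hr.1], by linarith [hr.2]⟩
    linarith
  have := abs_le.mp h1
  have := abs_le.mp h2
  cases this; cases abs_le.mp h1
  linarith [(abs_le.mp h1).1, (abs_le.mp h1).2, (abs_le.mp h2).1, (abs_le.mp h2).2]

/-- Corollary 4.6: `∫₀^{2π} sin θ · u*(θ) dθ → √3/2` as `γ → 0`. -/
theorem stationary_density_sin_expectation :
    ∀ ε > (0:ℝ), ∃ γ₀ > (0:ℝ), ∀ γ : ℝ, 0 < γ → γ < γ₀ →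
      |(∫ θ in (0:ℝ)..(2 * π), Real.sin θ * ustar γ θ) - Real.sqrt 3 / 2| < ε := by
  intro ε hε
  have hπ := Real.pi_gt_three
  have hπ0 := Real.pi_pos
  have hs3 : Real.sqrt 3 ≤ 2 := by
    rw [show (2:ℝ) = Real.sqrt 4 by
      rw [show (4:ℝ) = 2^2 by norm_num, Real.sqrt_sq]; norm_num]
    exact Real.sqrt_le_sqrt (by norm_num)
  have hs30 : 0 ≤ Real.sqrt 3 := Real.sqrt_nonneg 3
  set m : ℝ := phi (2*π/3) - phi (4*π/3) with hmdef
  set δ : ℝ := min (ε/2) (π/3) with hδdef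
  have hδ0 : 0 < δ := lt_min (by linarith) (by linarith)
  have hδπ : δ ≤ π/3 := min_le_right _ _
  have hδε : δ ≤ ε/2 := min_le_left _ _
  set c : ℝ := min (phi (2*π/3) - phi (2*π/3 - δ)) (phi (2*π/3) - phi (2*π/3 + δ)) with hcdef
  have hc0 : 0 < c := c_pos hδ0 hδπ
  set δ' : ℝ := min δ (c/12) with hδ'def
  have hδ'0 : 0 < δ' := lt_min hδ0 (by linarith)
  have hδ'π : δ' ≤ π/3 := (min_le_left _ _).trans hδπ
  have hδ'c : 6 * δ' ≤ c/2 := by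
    have := min_le_right δ (c/12); rw [← hδ'def] at this; linarith
  set X : ℝ := 32 * π^2 / (ε * δ'^2) with hXdef
  have hX0 : 0 < X := by positivity
  have hmax : (0:ℝ) < max 1 (Real.log X) := lt_of_lt_of_le one_pos (le_max_left _ _)
  refine ⟨c / max 1 (Real.log X), div_pos hc0 hmax, ?_⟩
  intro γ hγ0 hγlt
  have ha0 : (0:ℝ) < 2 / γ := by positivity
  set Z := Znorm γ with hZdef
  have hZ0 : 0 < Z := Znorm_pos γ
  set p : ℝ := 2*π/3 - δ with hpdef
  set q : ℝ := 2*π/3 + δ with hqdef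
  have hp0 : 0 ≤ p := by rw [hpdef]; linarith
  have hpq : p ≤ q := by rw [hpdef, hqdef]; linarith
  have hq2π : q ≤ 2*π := by rw [hqdef]; linarith
  set Wout : ℝ := 2 * π * Real.exp (2 / γ * (m - c)) / Z with hWoutdef
  have hWout0 : 0 ≤ Wout := by positivity
  -- upper bound outside
  have hOut : ∀ θ ∈ Icc 0 (2*π), (θ ≤ p ∨ q ≤ θ) → wfun γ θ ≤ Wout := by
    intro θ hθ hout
    rw [hWoutdef, hZdef]
    have hout' : θ ≤ 2*π/3 - δ ∨ 2*π/3 + δ ≤ θ := by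
      rcases hout with h | h
      · left; rw [hpdef] at h; exact h
      · right; rw [hqdef] at h; exact h
    exact w_upper hγ0 (fun r hr => region_out hδ0 hδπ hθ hout' hr)
  -- lower bound inside
  set LBp : ℝ := δ' * Real.exp (2 / γ * (m - 6 * δ')) / Z with hLBpdef
  have hLBp0 : 0 < LBp := by positivity
  have hIn : ∀ θ ∈ Icc (2*π/3 - δ') (2*π/3), LBp ≤ wfun γ θ := by
    intro θ hθ
    rw [hLBpdef, hZdef]
    have h := w_lower (θ := θ) (M := m - 6*δ') (c1 := 4*π/3) (c2 := 4*π/3 + δ') hγ0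
      (by linarith [hθ.2]) (by linarith) (by linarith [hθ.1])
      (fun r hr => region_in hδ'0 hδ'π hθ hr)
    have he : 4*π/3 + δ' - 4*π/3 = δ' := by ring
    rw [he] at h
    exact h
  -- integrability
  have wi : ∀ a b : ℝ, IntervalIntegrable (wfun γ) volume a b :=
    fun a b => (wfun_cont γ).intervalIntegrable a b
  set D := ∫ s in (0:ℝ)..(2*π), wfun γ s with hDdef
  set In := (∫ s in (2*π/3 - δ')..(2*π/3:ℝ), wfun γ s) with hIndef
  have hInLB : δ' * LBp ≤ In := by
    rw [hIndef]
    calc δ' * LBp = ∫ _s in (2*π/3 - δ')..(2*π/3), LBp := by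
          rw [intervalIntegral.integral_const, smul_eq_mul]; ring_nf
      _ ≤ _ := intervalIntegral.integral_mono_on (by linarith) intervalIntegrable_const
          (wi _ _) hIn
  have hInD : In ≤ D := by
    have s1 : (∫ s in (0:ℝ)..(2*π/3 - δ'), wfun γ s) + In = ∫ s in (0:ℝ)..(2*π/3), wfun γ s :=
      intervalIntegral.integral_add_adjacent_intervals (wi _ _) (wi _ _)
    have s2 : (∫ s in (0:ℝ)..(2*π/3), wfun γ s) + (∫ s in (2*π/3:ℝ)..(2*π), wfun γ s) = D :=
      intervalIntegral.integral_add_adjacent_intervals (wi _ _) (wi _ _)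
    have n1 : 0 ≤ ∫ s in (0:ℝ)..(2*π/3 - δ'), wfun γ s :=
      intervalIntegral.integral_nonneg (by linarith) (fun u _ => (w_pos γ u).le)
    have n2 : 0 ≤ ∫ s in (2*π/3:ℝ)..(2*π), wfun γ s :=
      intervalIntegral.integral_nonneg (by linarith) (fun u _ => (w_pos γ u).le)
    linarith
  have hD0 : 0 < D := lt_of_lt_of_le (by positivity : (0:ℝ) < δ' * LBp) (hInLB.trans hInD)
  -- numerator split
  have fint : ∀ a b : ℝ,
      IntervalIntegrable (fun θ => (Real.sin θ - Real.sqrt 3 / 2) * wfun γ θ) volume a b :=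
    fun a b => (((Real.continuous_sin.sub continuous_const).mul (wfun_cont γ)).intervalIntegrable a b)
  set A1 := ∫ θ in (0:ℝ)..p, (Real.sin θ - Real.sqrt 3 / 2) * wfun γ θ with hA1
  set A2 := ∫ θ in p..q, (Real.sin θ - Real.sqrt 3 / 2) * wfun γ θ with hA2
  set A3 := ∫ θ in q..(2*π), (Real.sin θ - Real.sqrt 3 / 2) * wfun γ θ with hA3
  have hsplit : A1 + A2 + A3 = ∫ θ in (0:ℝ)..(2*π), (Real.sin θ - Real.sqrt 3 / 2) * wfun γ θ := by
    rw [hA1, hA2, hA3]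
    rw [intervalIntegral.integral_add_adjacent_intervals (fint 0 p) (fint p q)]
    exact intervalIntegral.integral_add_adjacent_intervals (fint 0 q) (fint q (2*π))
  -- bounds on pieces
  have habs : ∀ θ, |(Real.sin θ - Real.sqrt 3 / 2) * wfun γ θ|
      = |Real.sin θ - Real.sqrt 3 / 2| * wfun γ θ := by
    intro θ
    rw [abs_mul, abs_of_pos (w_pos γ θ)]
  have houter : ∀ a b : ℝ, 0 ≤ a → a ≤ b → b ≤ 2*π → (∀ θ ∈ Icc a b, θ ≤ p ∨ q ≤ θ) →
      |∫ θ in a..b, (Real.sin θ - Real.sqrt 3 / 2) * wfun γ θ| ≤ 2 * π * (2 * Wout) := by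
    intro a b ha hab hb2 hout
    calc |∫ θ in a..b, (Real.sin θ - Real.sqrt 3 / 2) * wfun γ θ|
        ≤ ∫ θ in a..b, |(Real.sin θ - Real.sqrt 3 / 2) * wfun γ θ| :=
          intervalIntegral.abs_integral_le_integral_abs hab
      _ ≤ ∫ _θ in a..b, 2 * Wout := by
          apply intervalIntegral.integral_mono_on hab ((fint a b).abs) intervalIntegrable_const
          intro θ hθ
          rw [habs]
          have h1 : |Real.sin θ - Real.sqrt 3 / 2| ≤ 2 := by
            have := Real.neg_one_le_sin θ
            have := Real.sin_le_one θ
            rw [abs_le]; constructor <;> [linarith; linarith]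
          have h2 : wfun γ θ ≤ Wout := hOut θ ⟨ha.trans hθ.1, hθ.2.trans hb2⟩ (hout θ hθ)
          have := (w_pos γ θ).le
          nlinarith
      _ = (b - a) * (2 * Wout) := by rw [intervalIntegral.integral_const, smul_eq_mul]
      _ ≤ 2 * π * (2 * Wout) := by nlinarith
  have hA1b : |A1| ≤ 2 * π * (2 * Wout) :=
    houter 0 p le_rfl hp0 (by linarith) (fun θ hθ => Or.inl hθ.2)
  have hA3b : |A3| ≤ 2 * π * (2 * Wout) :=
    houter q (2*π) (by linarith) hq2π le_rfl (fun θ hθ => Or.inr hθ.1)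
  have hA2b : |A2| ≤ δ * D := by
    have step1 : |A2| ≤ ∫ θ in p..q, |(Real.sin θ - Real.sqrt 3 / 2) * wfun γ θ| :=
      intervalIntegral.abs_integral_le_integral_abs hpq
    have step2 : (∫ θ in p..q, |(Real.sin θ - Real.sqrt 3 / 2) * wfun γ θ|)
        ≤ ∫ θ in p..q, δ * wfun γ θ := by
      apply intervalIntegral.integral_mono_on hpq ((fint p q).abs)
        ((continuous_const.mul (wfun_cont γ)).intervalIntegrable _ _)
      intro θ hθ
      rw [habs]
      have h1 : |Real.sin θ - Real.sqrt 3 / 2| ≤ δ := by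
        have := sin_lip θ (2*π/3)
        rw [sin_two_pi_div_three] at this
        have hl := hθ.1; have hr := hθ.2
        rw [hpdef] at hl; rw [hqdef] at hr
        have h2 : |θ - 2*π/3| ≤ δ := abs_le.mpr ⟨by linarith, by linarith⟩
        linarith
      have := (w_pos γ θ).le
      show |Real.sin θ - Real.sqrt 3 / 2| * wfun γ θ ≤ δ * wfun γ θ
      nlinarith
    have step3 : (∫ θ in p..q, δ * wfun γ θ) = δ * ∫ θ in p..q, wfun γ θ :=
      intervalIntegral.integral_const_mul _ _
    have step4 : (∫ θ in p..q, wfun γ θ) ≤ D := by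
      have s1 : (∫ s in (0:ℝ)..p, wfun γ s) + (∫ s in p..q, wfun γ s)
          = ∫ s in (0:ℝ)..q, wfun γ s :=
        intervalIntegral.integral_add_adjacent_intervals (wi _ _) (wi _ _)
      have s2 : (∫ s in (0:ℝ)..q, wfun γ s) + (∫ s in q..(2*π), wfun γ s) = D :=
        intervalIntegral.integral_add_adjacent_intervals (wi _ _) (wi _ _)
      have n1 : 0 ≤ ∫ s in (0:ℝ)..p, wfun γ s :=
        intervalIntegral.integral_nonneg hp0 (fun u _ => (w_pos γ u).le)
      have n2 : 0 ≤ ∫ s in q..(2*π), wfun γ s :=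
        intervalIntegral.integral_nonneg hq2π (fun u _ => (w_pos γ u).le)
      linarith
    calc |A2| ≤ ∫ θ in p..q, δ * wfun γ θ := step1.trans step2
      _ = δ * ∫ θ in p..q, wfun γ θ := step3
      _ ≤ δ * D := by nlinarith
  -- identification of the target integral
  have hN : (∫ θ in (0:ℝ)..(2 * π), Real.sin θ * ustar γ θ)
      = (∫ θ in (0:ℝ)..(2*π), Real.sin θ * wfun γ θ) / D := by
    have : ∀ θ : ℝ, Real.sin θ * ustar γ θ = Real.sin θ * wfun γ θ / D := by
      intro θ; simp only [ustar]; rw [← hDdef]; ring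
    simp_rw [this]
    exact intervalIntegral.integral_div _ _
  set N := ∫ θ in (0:ℝ)..(2*π), Real.sin θ * wfun γ θ with hNdef
  have hND : N - Real.sqrt 3 / 2 * D = A1 + A2 + A3 := by
    rw [hsplit, hNdef, hDdef]
    rw [← intervalIntegral.integral_const_mul]
    rw [← intervalIntegral.integral_sub (f := fun θ => Real.sin θ * wfun γ θ)
      (g := fun θ => Real.sqrt 3 / 2 * wfun γ θ)
      ((Real.continuous_sin.mul (wfun_cont γ)).intervalIntegrable _ _)
      ((continuous_const.mul (wfun_cont γ)).intervalIntegrable _ _)]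
    apply intervalIntegral.integral_congr
    intro θ _
    ring
  -- final estimate
  have key : |N / D - Real.sqrt 3 / 2| ≤ δ + 8 * π * Wout / D := by
    have e1 : N / D - Real.sqrt 3 / 2 = (N - Real.sqrt 3 / 2 * D) / D := by
      field_simp [hD0.ne']
    rw [e1, hND, abs_div, abs_of_pos hD0]
    have : |A1 + A2 + A3| ≤ δ * D + 8 * π * Wout := by
      calc |A1 + A2 + A3| ≤ |A1| + |A2| + |A3| := abs_add_three _ _ _
        _ ≤ 2 * π * (2 * Wout) + δ * D + 2 * π * (2 * Wout) := by linarith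
        _ = δ * D + 8 * π * Wout := by ring
    calc |A1 + A2 + A3| / D ≤ (δ * D + 8 * π * Wout) / D := by
          gcongr
      _ = δ + 8 * π * Wout / D := by field_simp
  -- bound the ratio term
  have hratio : 8 * π * Wout / D < ε / 2 := by
    have hDLB : δ' * LBp ≤ D := hInLB.trans hInD
    have h1 : 8 * π * Wout / D ≤ 8 * π * Wout / (δ' * LBp) := by
      gcongr <;> first | positivity | exact hDLB
    have h2 : 8 * π * Wout / (δ' * LBp)
        = 16 * π^2 / δ'^2 * Real.exp (2 / γ * (m - c) - 2 / γ * (m - 6 * δ')) := by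
      rw [hWoutdef, hLBpdef, Real.exp_sub]
      field_simp
      ring
    have harg : 2 / γ * (m - c) - 2 / γ * (m - 6 * δ') ≤ -(c/γ) := by
      have he : 2 / γ * (m - c) - 2 / γ * (m - 6 * δ') = 2/γ * (6*δ' - c) := by ring
      have he2 : -(c/γ) = 2/γ * (-(c/2)) := by ring
      rw [he, he2]
      apply mul_le_mul_of_nonneg_left _ ha0.le
      linarith
    have hlogX : Real.log X < c / γ := by
      have h4 : γ * max 1 (Real.log X) < c := (lt_div_iff₀ hmax).mp hγlt
      rw [mul_comm] at h4
      have h5 : max 1 (Real.log X) < c / γ := (lt_div_iff₀ hγ0).mpr h4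
      exact lt_of_le_of_lt (le_max_right _ _) h5
    have hexp : Real.exp (2 / γ * (m - c) - 2 / γ * (m - 6 * δ')) < 1 / X := by
      have hlt : Real.exp (2 / γ * (m - c) - 2 / γ * (m - 6 * δ')) < Real.exp (-Real.log X) :=
        Real.exp_lt_exp.mpr (lt_of_le_of_lt harg (by linarith))
      rwa [Real.exp_neg, Real.exp_log hX0, ← one_div] at hlt
    calc 8 * π * Wout / D
        ≤ 16 * π^2 / δ'^2 * Real.exp (2 / γ * (m - c) - 2 / γ * (m - 6 * δ')) := h1.trans_eq h2
      _ < 16 * π^2 / δ'^2 * (1/X) := by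
          exact mul_lt_mul_of_pos_left hexp (by positivity)
      _ = ε / 2 := by rw [hXdef]; field_simp; ring
  calc |(∫ θ in (0:ℝ)..(2 * π), Real.sin θ * ustar γ θ) - Real.sqrt 3 / 2|
      = |N / D - Real.sqrt 3 / 2| := by rw [hN]
    _ ≤ δ + 8 * π * Wout / D := key
    _ < ε/2 + ε/2 := by linarith
    _ = ε := by ring
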